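/- arXiv:0704.0002 — 4 statements merged into one kernel-verified Lean document; each statement's English description precedes it below -/
import Mathlib

section
/- A graph G is (k,ℓ)-sparse, where k ≥ 1 and 0 ≤ ℓ ≤ 2k−1, if and only if G is a (k,ℓ)-pebble-game graph, i.e., G can be constructed by the (k,ℓ)-pebble game with colors. -/
open scoped Classical

namespace PebbleGame

/-- A configuration of the `(k,ℓ)`-pebble game with colors: a directed multigraph
whose edges are records `(tail, head, color)` (the color of an edge is the color of
the unique pebble lying on it), together with the multiset of colors of the pebbles
sitting on each vertex. -/
structure PGConfig (V : Type) (k : ℕ) where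
  edges : Multiset (V × V × Fin k)
  pebs : V → Multiset (Fin k)

variable {V : Type} [DecidableEq V] {k ℓ : ℕ}

/-- The configuration resulting from an add-edge move: a pebble of color `c` is picked
up from `v`, the directed edge `vw` is added and the pebble is placed on it. -/
def addEdgeCfg (H : PGConfig V k) (v w : V) (c : Fin k) : PGConfig V k :=
  ⟨(v, w, c) ::ₘ H.edges, Function.update H.pebs v ((H.pebs v).erase c)⟩

/-- The configuration resulting from a pebble-slide move along the edge `(v, w, c)`,
using a pebble of color `c'` on `w`: the edge `vw` is replaced by `wv`, the pebble of
color `c` that was on the edge goes to `v`, and the pebble of color `c'` from `w` is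
placed on the new edge `wv`. -/
def slideCfg (H : PGConfig V k) (v w : V) (c c' : Fin k) : PGConfig V k :=
  ⟨(w, v, c') ::ₘ H.edges.erase (v, w, c),
    Function.update (Function.update H.pebs w ((H.pebs w).erase c')) v
      (c ::ₘ Function.update H.pebs w ((H.pebs w).erase c') v)⟩

/-- A legal move of the `(k,ℓ)`-pebble game with colors. -/
inductive Step (k ℓ : ℕ) : PGConfig V k → PGConfig V k → Prop
  | add (H : PGConfig V k) (v w : V) (c : Fin k)
      (hpeb : ℓ + 1 ≤ ∑ u ∈ ({v, w} : Finset V), (H.pebs u).card)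
      (hc : c ∈ H.pebs v) :
      Step k ℓ H (addEdgeCfg H v w c)
  | slide (H : PGConfig V k) (v w : V) (c c' : Fin k)
      (he : (v, w, c) ∈ H.edges)
      (hc : c' ∈ H.pebs w) :
      Step k ℓ H (slideCfg H v w c c')

/-- The initial configuration: no edges, and one pebble of each of the `k` colors on
every vertex. -/
def initCfg (V : Type) [DecidableEq V] [Fintype V] (k : ℕ) : PGConfig V k :=
  ⟨0, fun _ => Finset.univ.val⟩

/-- A configuration is reachable if it arises from the initial configuration by a
finite sequence of legal moves. -/
def Reachable [Fintype V] (k ℓ : ℕ) (H : PGConfig V k) : Prop :=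
  Relation.ReflTransGen (Step k ℓ) (initCfg V k) H

/-- The underlying undirected multigraph (multiset of edges) of a configuration. -/
def undirected (H : PGConfig V k) : Multiset (Sym2 V) :=
  H.edges.map fun e => s(e.1, e.2.1)

/-- The (undirected) edges of a configuration carrying a pebble of color `c`. -/
def monoEdges (H : PGConfig V k) (c : Fin k) : Multiset (Sym2 V) :=
  (H.edges.filter fun e => e.2.2 = c).map fun e => s(e.1, e.2.1)

/-- The undirected edges of color `c` among a multiset `F` of directed colored
edges. -/
def monoOf (F : Multiset (V × V × Fin k)) (c : Fin k) : Multiset (Sym2 V) :=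
  (F.filter fun e => e.2.2 = c).map fun e => s(e.1, e.2.1)

/-- `G` (a multiset of undirected edges on the fixed finite vertex set `V`) is a
`(k,ℓ)`-pebble-game graph if it is the underlying undirected multigraph of some
reachable configuration. -/
def PebbleGameGraph [Fintype V] (k ℓ : ℕ) (E : Multiset (Sym2 V)) : Prop :=
  ∃ H : PGConfig V k, Reachable k ℓ H ∧ undirected H = E

/-- The edges of `E` spanned by the vertex set `S` (both endpoints in `S`). -/
def spanned (E : Multiset (Sym2 V)) (S : Finset V) : Multiset (Sym2 V) :=
  E.filter fun e => e ∈ S.sym2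

/-- A multigraph is `(k,ℓ)`-sparse if every nonempty set of `n'` vertices spans at
most `k n' - ℓ` edges. -/
def Sparse (k ℓ : ℕ) (E : Multiset (Sym2 V)) : Prop :=
  ∀ S : Finset V, S.Nonempty → (spanned E S).card ≤ k * S.card - ℓ

/-- A multigraph is `(k,ℓ)`-tight if it is `(k,ℓ)`-sparse with exactly `k|V| - ℓ`
edges. -/
def Tight [Fintype V] (k ℓ : ℕ) (E : Multiset (Sym2 V)) : Prop :=
  Sparse k ℓ E ∧ E.card = k * Fintype.card V - ℓ

/-- Connectivity (as undirected multigraphs) via the edges of `F`. -/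
def Conn (F : Multiset (Sym2 V)) : V → V → Prop :=
  Relation.ReflTransGen fun a b => s(a, b) ∈ F

/-- The connected components of the graph with vertex set `S` and edge multiset `F`
(whose edges are assumed to be spanned by `S`), as a finset of vertex sets. -/
noncomputable def components (S : Finset V) (F : Multiset (Sym2 V)) : Finset (Finset V) :=
  S.image fun v => S.filter fun u => Conn F v u

/-- The tree-pieces of the graph `(S, F)`: connected components that contain no cycle,
i.e. whose spanned edge count is exactly one less than their vertex count (an isolated
vertex is a tree-piece). -/
noncomputable def treePieces (S : Finset V) (F : Multiset (Sym2 V)) : Finset (Finset V) :=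
  (components S F).filter fun C => (spanned F C).card + 1 = C.card

/-- The number of tree-pieces of the graph `(S, F)`. -/
noncomputable def treePieceCount (S : Finset V) (F : Multiset (Sym2 V)) : ℕ :=
  (treePieces S F).card

/-- A multigraph contains a cycle iff some nonempty vertex set spans at least as many
edges as it has vertices. -/
def HasCycle (F : Multiset (Sym2 V)) : Prop :=
  ∃ S : Finset V, S.Nonempty ∧ S.card ≤ (spanned F S).card

/-- A spanning tree on the whole (finite) vertex set: connected with `|V| - 1` edges. -/
def IsSpanningTree [Fintype V] (T : Multiset (Sym2 V)) : Prop :=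
  (∀ u v : V, Conn T u v) ∧ T.card + 1 = Fintype.card V

/-- A spanning map-graph: the edges admit an orientation in which every vertex has
out-degree exactly one. -/
def IsSpanningMapGraph [Fintype V] (T : Multiset (Sym2 V)) : Prop :=
  ∃ M : Multiset (V × V), M.map (fun p => s(p.1, p.2)) = T ∧
    ∀ v : V, (M.filter fun p => p.1 = v).card = 1

/-- A `(k,ℓ)`-maps-and-trees decomposition: `ℓ` edge-disjoint spanning trees and
`k - ℓ` edge-disjoint spanning map-graphs whose union is `E`. -/
def MapsAndTrees [Fintype V] (k ℓ : ℕ) (E : Multiset (Sym2 V)) : Prop :=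
  ∃ (T : Fin ℓ → Multiset (Sym2 V)) (M : Fin (k - ℓ) → Multiset (Sym2 V)),
    ((∑ i, T i) + ∑ j, M j) = E ∧ (∀ i, IsSpanningTree (T i)) ∧
      ∀ j, IsSpanningMapGraph (M j)

/-- `(S, T)` is a (possibly single-vertex) tree: nonempty vertex set `S`, edges spanned
by `S`, connected on `S`, and `|T| + 1 = |S|`. -/
def IsTreeOn (S : Finset V) (T : Multiset (Sym2 V)) : Prop :=
  S.Nonempty ∧ (∀ e ∈ T, e ∈ S.sym2) ∧ (∀ u ∈ S, ∀ v ∈ S, Conn T u v) ∧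
    T.card + 1 = S.card

/-- An `ℓTk` decomposition of `E`: `ℓ` edge-disjoint (not necessarily spanning,
possibly single-vertex) trees `(S i, T i)` whose edges partition `E`, such that every
vertex belongs to exactly `k` of the trees. -/
def LTkDecomp (k ℓ : ℕ) (E : Multiset (Sym2 V)) (S : Fin ℓ → Finset V)
    (T : Fin ℓ → Multiset (Sym2 V)) : Prop :=
  (∑ i, T i) = E ∧ (∀ i, IsTreeOn (S i) (T i)) ∧
    ∀ v : V, (Finset.univ.filter fun i => v ∈ S i).card = k

/-- A proper `ℓTk`: an `ℓTk` decomposition such that every nonempty subgraph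
(vertex set `U`, together with a sub-multiset `F i` of each tree spanned by `U`)
contains at least `ℓ` tree-pieces, the tree-pieces being the connected components of
the intersections of the trees with the subgraph. -/
def ProperLTk (k ℓ : ℕ) (E : Multiset (Sym2 V)) : Prop :=
  ∃ (S : Fin ℓ → Finset V) (T : Fin ℓ → Multiset (Sym2 V)),
    LTkDecomp k ℓ E S T ∧
      ∀ U : Finset V, U.Nonempty →
        ∀ F : Fin ℓ → Multiset (Sym2 V),
          (∀ i, F i ≤ T i) → (∀ i, ∀ e ∈ F i, e ∈ U.sym2) →
            ℓ ≤ ∑ i, treePieceCount (U ∩ S i) (F i)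

/-- One pebble-slide move (as a relation between configurations). -/
def SlideRel (k : ℕ) (A B : PGConfig V k) : Prop :=
  ∃ (v w : V) (c c' : Fin k), (v, w, c) ∈ A.edges ∧ c' ∈ A.pebs w ∧
    B = slideCfg A v w c c'

/-- A canonical move of the `(k,ℓ)`-pebble game with colors: add-edge moves cover the
new edge with a color present on both endpoints if one exists, and otherwise with the
highest-numbered color present; pebble-slide moves never create a monochromatic
cycle. -/
inductive CanStep (k ℓ : ℕ) : PGConfig V k → PGConfig V k → Prop
  | add (H : PGConfig V k) (v w : V) (c : Fin k)
      (hpeb : ℓ + 1 ≤ ∑ u ∈ ({v, w} : Finset V), (H.pebs u).card)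
      (hc : c ∈ H.pebs v)
      (hcanon : c ∈ H.pebs w ∨
        ((∀ c' : Fin k, c' ∈ H.pebs v → c' ∉ H.pebs w) ∧
          ∀ c' : Fin k, (c' ∈ H.pebs v ∨ c' ∈ H.pebs w) → c' ≤ c)) :
      CanStep k ℓ H (addEdgeCfg H v w c)
  | slide (H : PGConfig V k) (v w : V) (c c' : Fin k)
      (he : (v, w, c) ∈ H.edges)
      (hc : c' ∈ H.pebs w)
      (hnocycle : ∀ i : Fin k,
        HasCycle (monoEdges (slideCfg H v w c c') i) → HasCycle (monoEdges H i)) :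
      CanStep k ℓ H (slideCfg H v w c c')

/-- The graph obtained from a configuration by replacing every pebble lying on a
vertex by a loop at that vertex. -/
def withLoops [Fintype V] (H : PGConfig V k) : Multiset (Sym2 V) :=
  undirected H + Finset.univ.val.bind fun v => Multiset.replicate (H.pebs v).card s(v, v)

end PebbleGame
open PebbleGame

/-! Every reachable configuration has, at each vertex, pebbles plus out-degree equal to `k`.
Summed over a vertex set `S`, this says that the pebbles on `S`, the edges leaving `S` and the
edges spanned by `S` add up to `k |S|`. An add-edge move inside `S` needs `ℓ + 1` pebbles on `S`,
so afterwards `S` still spans at most `k |S| - ℓ` edges: pebble-game graphs are sparse.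

Conversely, the edges of a sparse graph are added one at a time. Before adding `uv`, let `R` be
the set of vertices reachable from `{u, v}` along directed edges. No edge leaves `R`, so the
sparsity of the graph with `uv` forces `ℓ + 1` pebbles onto `R`; as long as `u` and `v` hold fewer,
a pebble elsewhere in `R` is brought to `{u, v}` by reversing the edges of a directed path. -/

namespace Relation

variable {α : Type*} {r : α → α → Prop} {a x z : α}

theorem ReflTransGen.ne_of_avoiding (h : ReflTransGen (fun u v => r u v ∧ v ≠ z) a x)
    (haz : a ≠ z) : x ≠ z := by
  rcases h.cases_tail with rfl | ⟨_, _, -, hxz⟩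
  exacts [haz, hxz]

theorem ReflTransGen.exists_last_step_avoiding (h : ReflTransGen r a z) (haz : a ≠ z) :
    ∃ y, y ≠ z ∧ ReflTransGen (fun u v => r u v ∧ v ≠ z) a y ∧ r y z := by
  have key : ∀ x, ReflTransGen r a x → ReflTransGen (fun u v => r u v ∧ v ≠ z) a x ∨
      ∃ y, y ≠ z ∧ ReflTransGen (fun u v => r u v ∧ v ≠ z) a y ∧ r y z := by
    intro x hx
    induction hx with
    | refl => exact .inl .refl
    | @tail b c _ hbc ih =>
      rcases ih with ih | ih
      · by_cases hcz : c = z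
        · exact .inr ⟨b, ih.ne_of_avoiding haz, ih, hcz ▸ hbc⟩
        · exact .inl (ih.tail ⟨hbc, hcz⟩)
      · exact .inr ih
  rcases key z h with h' | h'
  · exact absurd rfl (h'.ne_of_avoiding haz)
  · exact h'

end Relation

namespace PebbleGame

open Relation

variable {V : Type} [DecidableEq V] {k ℓ : ℕ}

noncomputable def outdeg (H : PGConfig V k) (v : V) : ℕ :=
  (H.edges.filter fun e => e.1 = v).card

def PebbleBalanced (k : ℕ) (H : PGConfig V k) : Prop :=
  ∀ v, (H.pebs v).card + outdeg H v = k

def pebbleCount (H : PGConfig V k) (S : Finset V) : ℕ :=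
  ∑ x ∈ S, (H.pebs x).card

noncomputable def leaving (H : PGConfig V k) (S : Finset V) : ℕ :=
  (H.edges.filter fun e => e.1 ∈ S ∧ e.2.1 ∉ S).card

def arc (H : PGConfig V k) (u v : V) : Prop :=
  ∃ c, (u, v, c) ∈ H.edges

section Moves

variable {H : PGConfig V k} {v w : V} {c c' : Fin k}

lemma card_pebs_addEdgeCfg (hc : c ∈ H.pebs v) (u : V) :
    ((addEdgeCfg H v w c).pebs u).card + (if u = v then 1 else 0) = (H.pebs u).card := by
  by_cases huv : u = v
  · subst huv
    simp [addEdgeCfg, Multiset.card_erase_add_one hc]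
  · simp [addEdgeCfg, huv]

lemma outdeg_addEdgeCfg (u : V) :
    outdeg (addEdgeCfg H v w c) u = outdeg H u + (if u = v then 1 else 0) := by
  by_cases huv : u = v <;> simp [addEdgeCfg, outdeg, huv, eq_comm]

lemma undirected_addEdgeCfg : undirected (addEdgeCfg H v w c) = s(v, w) ::ₘ undirected H := by
  simp [addEdgeCfg, undirected]

lemma card_pebs_slideCfg (hc : c' ∈ H.pebs w) (u : V) :
    ((slideCfg H v w c c').pebs u).card + (if u = w then 1 else 0) =
      (H.pebs u).card + (if u = v then 1 else 0) := by
  have hw := Multiset.card_erase_add_one hc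
  rcases eq_or_ne u v with rfl | huv <;> rcases eq_or_ne u w with rfl | huw <;>
    simp_all [slideCfg]

lemma outdeg_slideCfg (he : (v, w, c) ∈ H.edges) (u : V) :
    outdeg (slideCfg H v w c c') u + (if u = v then 1 else 0) =
      outdeg H u + (if u = w then 1 else 0) := by
  obtain ⟨t, ht⟩ := Multiset.exists_cons_of_mem he
  simp only [slideCfg, outdeg, ht, Multiset.erase_cons_head, Multiset.filter_cons,
    Multiset.card_add, apply_ite Multiset.card, Multiset.card_singleton, Multiset.card_zero]
  grind

lemma undirected_slideCfg (he : (v, w, c) ∈ H.edges) :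
    undirected (slideCfg H v w c c') = undirected H := by
  obtain ⟨t, ht⟩ := Multiset.exists_cons_of_mem he
  simp only [slideCfg, undirected, ht, Multiset.erase_cons_head, Multiset.map_cons]
  rw [Sym2.eq_swap]

lemma pebbleCount_slideCfg (hc : c' ∈ H.pebs w) (S : Finset V) :
    pebbleCount (slideCfg H v w c c') S + (if w ∈ S then 1 else 0) =
      pebbleCount H S + (if v ∈ S then 1 else 0) := by
  have h := Finset.sum_congr rfl fun u (_ : u ∈ S) => card_pebs_slideCfg (v := v) (c := c) hc u
  unfold pebbleCount
  simpa [Finset.sum_add_distrib, Finset.sum_ite_eq'] using h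

lemma Step.pebbleBalanced {A B : PGConfig V k} (h : Step k ℓ A B) (hA : PebbleBalanced k A) :
    PebbleBalanced k B := by
  intro u
  have hu := hA u
  cases h with
  | add v w c _ hc =>
    have h1 := card_pebs_addEdgeCfg (w := w) hc u
    have h2 := outdeg_addEdgeCfg (H := A) (v := v) (w := w) (c := c) u
    split_ifs at h1 h2 <;> omega
  | slide v w c c' he hc =>
    have h1 := card_pebs_slideCfg (v := v) (c := c) hc u
    have h2 := outdeg_slideCfg (c' := c') he u
    split_ifs at h1 h2 <;> omega

lemma PebbleBalanced.of_reflTransGen {A B : PGConfig V k}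
    (h : ReflTransGen (Step k ℓ) A B) (hA : PebbleBalanced k A) : PebbleBalanced k B := by
  induction h with
  | refl => exact hA
  | tail _ hstep ih => exact hstep.pebbleBalanced ih

end Moves

lemma card_spanned_cons (e : Sym2 V) (E : Multiset (Sym2 V)) (S : Finset V) :
    (spanned (e ::ₘ E) S).card = (spanned E S).card + if e ∈ S.sym2 then 1 else 0 := by
  simp only [spanned, Multiset.filter_cons]
  split_ifs <;> simp [add_comm]

lemma Sparse.of_le {E F : Multiset (Sym2 V)} (hFE : F ≤ E) (hE : Sparse k ℓ E) :
    Sparse k ℓ F := fun S hS =>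
  (Multiset.card_le_card (Multiset.filter_le_filter _ hFE)).trans (hE S hS)

lemma sum_outdeg (H : PGConfig V k) (S : Finset V) :
    ∑ v ∈ S, outdeg H v = (H.edges.filter fun e => e.1 ∈ S).card := by
  unfold outdeg
  induction H.edges using Multiset.induction with
  | empty => simp
  | cons a t ih =>
    simp only [Multiset.filter_cons, Multiset.card_add, apply_ite Multiset.card,
      Multiset.card_singleton, Multiset.card_zero, Finset.sum_add_distrib, ih]
    rw [Finset.sum_ite_eq S a.1 (fun _ => 1)]

lemma card_filter_fst_mem (H : PGConfig V k) (S : Finset V) :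
    (H.edges.filter fun e => e.1 ∈ S).card = (spanned (undirected H) S).card + leaving H S := by
  have hspan : spanned (undirected H) S =
      (H.edges.filter fun e => e.1 ∈ S ∧ e.2.1 ∈ S).map fun e => s(e.1, e.2.1) := by
    simp only [spanned, undirected, Multiset.filter_map]
    congr 1
    exact Multiset.filter_congr fun e _ => by simp
  rw [hspan, Multiset.card_map, leaving, ← Multiset.card_add,
    ← Multiset.filter_add_not (fun e => e.2.1 ∈ S) (H.edges.filter fun e => e.1 ∈ S),
    Multiset.filter_filter, Multiset.filter_filter]
  simp only [and_comm]

/-- Each edge with tail in `S` is either spanned by `S` or leaves it. -/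
lemma PebbleBalanced.pebbleCount_add_leaving_add_card_spanned {H : PGConfig V k}
    (hH : PebbleBalanced k H) (S : Finset V) :
    pebbleCount H S + leaving H S + (spanned (undirected H) S).card = k * S.card := by
  have h := Finset.sum_congr rfl fun v (_ : v ∈ S) => hH v
  rw [Finset.sum_add_distrib, sum_outdeg, card_filter_fst_mem, Finset.sum_const,
    smul_eq_mul, mul_comm] at h
  unfold pebbleCount
  omega

lemma Step.sparse {A B : PGConfig V k} (h : Step k ℓ A B) (hA : PebbleBalanced k A)
    (hs : Sparse k ℓ (undirected A)) : Sparse k ℓ (undirected B) := by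
  cases h with
  | add v w c hpeb _ =>
    intro S hS
    rw [undirected_addEdgeCfg, card_spanned_cons]
    split_ifs with hvw
    · have hsub : ({v, w} : Finset V) ⊆ S := by
        rw [Finset.mk_mem_sym2_iff] at hvw
        simp [Finset.insert_subset_iff, hvw]
      have hmono : pebbleCount A {v, w} ≤ pebbleCount A S := Finset.sum_le_sum_of_subset hsub
      have hcount := hA.pebbleCount_add_leaving_add_card_spanned S
      unfold pebbleCount at hmono hcount
      omega
    · simpa using hs S hS
  | slide v w c c' he _ => rwa [undirected_slideCfg he]

lemma Reachable.pebbleBalanced_and_sparse [Fintype V] {H : PGConfig V k}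
    (h : Reachable k ℓ H) : PebbleBalanced k H ∧ Sparse k ℓ (undirected H) := by
  induction h with
  | refl =>
    refine ⟨fun v => by simp [initCfg, outdeg, Finset.card_univ], fun S _ => ?_⟩
    simp [initCfg, undirected, spanned]
  | tail _ hstep ih => exact ⟨hstep.pebbleBalanced ih.1, hstep.sparse ih.1 ih.2⟩

lemma PebbleGameGraph.sparse [Fintype V] {E : Multiset (Sym2 V)}
    (h : PebbleGameGraph k ℓ E) : Sparse k ℓ E := by
  obtain ⟨H, hreach, rfl⟩ := h
  exact hreach.pebbleBalanced_and_sparse.2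

/-- The heads of the walk are confined to `A`, which loses the vertex `z` at each reversal of an
edge `yz`; this makes the induction terminate. -/
lemma exists_slides_pebbleCount_succ (S A : Finset V) :
    ∀ (H : PGConfig V k) (a z : V), a ∈ S → z ∉ S → H.pebs z ≠ 0 →
      ReflTransGen (fun x y => y ∈ A ∧ arc H x y) a z →
      ∃ H', ReflTransGen (Step k ℓ) H H' ∧ undirected H' = undirected H ∧
        pebbleCount H' S = pebbleCount H S + 1 := by
  induction A using Finset.strongInduction with
  | H A ih =>
    intro H a z haS hzS hz hwalk
    obtain ⟨y, hyz, hwalk', hzA, c, hyzc⟩ :=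
      hwalk.exists_last_step_avoiding fun h => hzS (h ▸ haS)
    obtain ⟨c', hc'⟩ := Multiset.exists_mem_of_ne_zero hz
    set H₁ := slideCfg H y z c c'
    have hstep : Step k ℓ H H₁ := .slide H y z c c' hyzc hc'
    have hund : undirected H₁ = undirected H := undirected_slideCfg hyzc
    have hcount : pebbleCount H₁ S + (if z ∈ S then 1 else 0) =
        pebbleCount H S + (if y ∈ S then 1 else 0) := pebbleCount_slideCfg hc' S
    rw [if_neg hzS] at hcount
    by_cases hyS : y ∈ S
    · rw [if_pos hyS] at hcount
      exact ⟨H₁, .single hstep, hund, hcount⟩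
    · rw [if_neg hyS] at hcount
      have hwalk₁ : ReflTransGen (fun x y => y ∈ A.erase z ∧ arc H₁ x y) a y := by
        refine ReflTransGen.mono ?_ _ _ hwalk'
        rintro x x' ⟨⟨hx'A, c'', hxx'⟩, hx'z⟩
        refine ⟨Finset.mem_erase.2 ⟨hx'z, hx'A⟩, c'', Multiset.mem_cons_of_mem ?_⟩
        exact (Multiset.mem_erase_of_ne fun h => hx'z (congrArg (·.2.1) h)).2 hxx'
      have hy : H₁.pebs y ≠ 0 := by simp [H₁, slideCfg]
      obtain ⟨H₂, hsteps, hund₂, hcount₂⟩ :=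
        ih (A.erase z) (Finset.erase_ssubset hzA) H₁ a y haS hyS hy hwalk₁
      exact ⟨H₂, .head hstep hsteps, hund₂.trans hund, by omega⟩

lemma exists_slides_pebbleCount_succ_of_le [Fintype V] {H : PGConfig V k} {S : Finset V}
    {e : Sym2 V} (heS : e ∈ S.sym2) (hH : PebbleBalanced k H)
    (hs : Sparse k ℓ (e ::ₘ undirected H)) (hle : pebbleCount H S ≤ ℓ) :
    ∃ H', ReflTransGen (Step k ℓ) H H' ∧ undirected H' = undirected H ∧
      pebbleCount H' S = pebbleCount H S + 1 := by
  set R := Finset.univ.filter fun z => ∃ a ∈ S, ReflTransGen (arc H) a z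
  have hSR : S ⊆ R := fun a ha => Finset.mem_filter.2 ⟨Finset.mem_univ a, a, ha, .refl⟩
  have hleaving : leaving H R = 0 := by
    simp only [leaving, Multiset.card_eq_zero, Multiset.filter_eq_nil]
    rintro ⟨x, y, c⟩ hxy ⟨hx, hy⟩
    obtain ⟨a, haS, hax⟩ := (Finset.mem_filter.1 hx).2
    exact hy (Finset.mem_filter.2 ⟨Finset.mem_univ y, a, haS, hax.tail ⟨c, hxy⟩⟩)
  obtain ⟨u, hu⟩ : S.Nonempty := by
    induction e using Sym2.ind with
    | _ u v => exact ⟨u, (Finset.mk_mem_sym2_iff.1 heS).1⟩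
  have hsparse := hs R ⟨u, hSR hu⟩
  rw [card_spanned_cons, if_pos (Finset.sym2_mono hSR heS)] at hsparse
  have hcount := hH.pebbleCount_add_leaving_add_card_spanned R
  have hsplit : pebbleCount H (R \ S) + pebbleCount H S = pebbleCount H R :=
    Finset.sum_sdiff hSR
  obtain ⟨z, hzRS, hz⟩ : ∃ z ∈ R \ S, (H.pebs z).card ≠ 0 :=
    Finset.exists_ne_zero_of_sum_ne_zero (by unfold pebbleCount at *; omega)
  obtain ⟨hzR, hzS⟩ := Finset.mem_sdiff.1 hzRS
  obtain ⟨a, haS, haz⟩ := (Finset.mem_filter.1 hzR).2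
  exact exists_slides_pebbleCount_succ S Finset.univ H a z haS hzS
    (by simpa using hz) (ReflTransGen.mono (fun _ y hxy => ⟨Finset.mem_univ y, hxy⟩) _ _ haz)

lemma exists_slides_le_pebbleCount [Fintype V] {H : PGConfig V k} {S : Finset V} {e : Sym2 V}
    (heS : e ∈ S.sym2) (hH : PebbleBalanced k H) (hs : Sparse k ℓ (e ::ₘ undirected H)) :
    ∃ H', ReflTransGen (Step k ℓ) H H' ∧ undirected H' = undirected H ∧
      ℓ + 1 ≤ pebbleCount H' S := by
  induction hd : ℓ + 1 - pebbleCount H S generalizing H with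
  | zero => exact ⟨H, .refl, rfl, by omega⟩
  | succ d ih =>
    obtain ⟨H₁, hsteps₁, hund₁, hcount₁⟩ :=
      exists_slides_pebbleCount_succ_of_le heS hH hs (by omega)
    obtain ⟨H₂, hsteps₂, hund₂, hcount₂⟩ :=
      ih (hH.of_reflTransGen hsteps₁) (by rwa [hund₁]) (by omega)
    exact ⟨H₂, hsteps₁.trans hsteps₂, hund₂.trans hund₁, hcount₂⟩

lemma exists_step_addEdgeCfg {H : PGConfig V k} {u v : V}
    (hpeb : ℓ + 1 ≤ pebbleCount H {u, v}) :
    ∃ H', Step k ℓ H H' ∧ undirected H' = s(u, v) ::ₘ undirected H := by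
  by_cases hu : H.pebs u = 0
  · have hv : H.pebs v ≠ 0 := by
      rintro hv
      have : pebbleCount H {u, v} = 0 := Finset.sum_eq_zero (by simp [hu, hv])
      omega
    obtain ⟨c, hc⟩ := Multiset.exists_mem_of_ne_zero hv
    refine ⟨addEdgeCfg H v u c, .add H v u c ?_ hc, ?_⟩
    · rwa [Finset.pair_comm]
    · rw [undirected_addEdgeCfg, Sym2.eq_swap]
  · obtain ⟨c, hc⟩ := Multiset.exists_mem_of_ne_zero hu
    exact ⟨addEdgeCfg H u v c, .add H u v c hpeb hc, undirected_addEdgeCfg⟩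

lemma Sparse.pebbleGameGraph [Fintype V] {E : Multiset (Sym2 V)} (hE : Sparse k ℓ E) :
    PebbleGameGraph k ℓ E := by
  induction E using Multiset.induction with
  | empty => exact ⟨initCfg V k, .refl, by simp [initCfg, undirected]⟩
  | cons e E ih =>
    obtain ⟨H, hreach, rfl⟩ := ih (hE.of_le (Multiset.le_cons_self _ _))
    induction e using Sym2.ind with
    | _ u v =>
      obtain ⟨H₁, hsteps, hund, hpeb⟩ := exists_slides_le_pebbleCount (S := {u, v}) (by simp)
        hreach.pebbleBalanced_and_sparse.1 hE
      obtain ⟨H₂, hstep, hund₂⟩ := exists_step_addEdgeCfg hpeb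
      exact ⟨H₂, (hreach.trans hsteps).tail hstep, by rw [hund₂, hund]⟩

end PebbleGame

theorem sparse_iff_pebbleGameGraph_general {V : Type} [Fintype V] [DecidableEq V]
    (k ℓ : ℕ) (E : Multiset (Sym2 V)) :
    Sparse k ℓ E ↔ PebbleGameGraph k ℓ E :=
  ⟨Sparse.pebbleGameGraph, PebbleGameGraph.sparse⟩

/-- A graph `G` is `(k,ℓ)`-sparse, where `k ≥ 1` and `0 ≤ ℓ ≤ 2k-1`,
if and only if `G` is a `(k,ℓ)`-pebble-game graph. -/
theorem sparse_iff_pebbleGameGraph {V : Type} [Fintype V] [DecidableEq V]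
    (k ℓ : ℕ) (hk : 1 ≤ k) (hℓ : ℓ ≤ 2 * k - 1) (E : Multiset (Sym2 V)) :
    Sparse k ℓ E ↔ PebbleGameGraph k ℓ E :=
  sparse_iff_pebbleGameGraph_general k ℓ E
end

section
/- In every reachable configuration of the (k,ℓ)-pebble game with colors, for each color c_i (1 ≤ i ≤ k), the subgraph H_i of H consisting of the edges carrying a pebble of color c_i is (1,0)-sparse. -/
open scoped Classical

open PebbleGame

/-!
Every vertex starts with one pebble of each color, and no move changes, for any vertex `u`,
the multiset of colors of the pebbles on `u` together with the colors of the edges directed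
out of `u`. So in a reachable configuration every vertex is the tail of at most one edge of
color `c`, and a vertex set `S` spans at most `|S|` edges of color `c`, each having its tail
in `S`.
-/

namespace PebbleGame

variable {V : Type} {k ℓ : ℕ}

theorem monoEdges_eq_map (H : PGConfig V k) (c : Fin k) :
    monoEdges H c =
      ((H.edges.filter (·.2.2 = c)).map fun e => (e.1, e.2.1)).map fun e => s(e.1, e.2) := by
  rw [monoEdges, Multiset.map_map]
  rfl

variable [DecidableEq V]

theorem sparse_one_zero_of_nodup_fst (D : Multiset (V × V)) (hD : (D.map Prod.fst).Nodup) :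
    Sparse 1 0 (D.map fun e => s(e.1, e.2)) := by
  intro S _
  have hspanned : (spanned (D.map fun e => s(e.1, e.2)) S).card ≤
      ((D.map Prod.fst).filter (· ∈ S)).card := by
    rw [spanned, Multiset.filter_map, Multiset.filter_map, Multiset.card_map, Multiset.card_map]
    exact Multiset.card_le_card <| Multiset.monotone_filter_right _
      fun e he => (Finset.mk_mem_sym2_iff.1 he).1
  have htails : (D.map Prod.fst).filter (· ∈ S) ≤ S.val :=
    (Multiset.le_iff_subset (hD.filter _)).2 fun v hv => (Multiset.mem_filter.1 hv).2
  simpa using hspanned.trans (Multiset.card_le_card htails)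

def heldColors (H : PGConfig V k) (u : V) : Multiset (Fin k) :=
  (H.edges.filter (·.1 = u)).map (·.2.2) + H.pebs u

theorem heldColors_addEdgeCfg {H : PGConfig V k} {v w : V} {c : Fin k} (hc : c ∈ H.pebs v)
    (u : V) : heldColors (addEdgeCfg H v w c) u = heldColors H u := by
  by_cases huv : u = v
  · subst huv
    conv_rhs => rw [heldColors, ← Multiset.cons_erase hc]
    simp [heldColors, addEdgeCfg, Multiset.filter_cons_of_pos]
  · simp [heldColors, addEdgeCfg, Multiset.filter_cons_of_neg, Ne.symm huv, huv]

theorem heldColors_slideCfg {H : PGConfig V k} {v w : V} {c c' : Fin k}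
    (he : (v, w, c) ∈ H.edges) (hc : c' ∈ H.pebs w) (u : V) :
    heldColors (slideCfg H v w c c') u = heldColors H u := by
  obtain ⟨R, hR⟩ := Multiset.exists_cons_of_mem he
  by_cases huv : u = v <;> by_cases huw : u = w
  · subst huv huw
    conv_rhs => rw [heldColors, ← Multiset.cons_erase hc]
    simp [heldColors, slideCfg, hR, Multiset.filter_cons_of_pos, Multiset.cons_swap]
  · subst huv
    simp [heldColors, slideCfg, hR, Multiset.filter_cons_of_pos, Ne.symm huw, huw]
  · subst huw
    conv_rhs => rw [heldColors, ← Multiset.cons_erase hc]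
    simp [heldColors, slideCfg, hR, Ne.symm huv, huv]
  · simp [heldColors, slideCfg, hR, Ne.symm huv, huv, Ne.symm huw, huw]

theorem Step.heldColors_eq {A B : PGConfig V k} (h : Step k ℓ A B) (u : V) :
    heldColors B u = heldColors A u := by
  cases h with
  | add v w c _ hc => exact heldColors_addEdgeCfg hc u
  | slide v w c c' he hc => exact heldColors_slideCfg he hc u

variable [Fintype V]

theorem Reachable.heldColors_eq_univ {H : PGConfig V k} (hH : Reachable k ℓ H) (u : V) :
    heldColors H u = Finset.univ.val := by
  induction hH with
  | refl => simp [heldColors, initCfg]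
  | tail _ hstep ih => rw [hstep.heldColors_eq, ih]

theorem Reachable.nodup_tails {H : PGConfig V k} (hH : Reachable k ℓ H) (c : Fin k) :
    ((H.edges.filter (·.2.2 = c)).map (·.1)).Nodup := by
  rw [Multiset.nodup_iff_count_le_one]
  intro u
  have hout : ((H.edges.filter (·.1 = u)).map (·.2.2)).Nodup :=
    Multiset.nodup_of_le (hH.heldColors_eq_univ u ▸ Multiset.le_add_right _ _)
      Finset.univ.nodup
  have hcount := Multiset.nodup_iff_count_le_one.1 hout c
  rw [Multiset.count_map, Multiset.filter_filter] at hcount ⊢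
  convert hcount using 3
  grind

end PebbleGame

theorem monochromatic_subgraphs_sparse_general {V : Type} [Fintype V] [DecidableEq V]
    (k ℓ : ℕ) (H : PGConfig V k)
    (hH : Reachable k ℓ H) (c : Fin k) :
    Sparse 1 0 (monoEdges H c) := by
  rw [monoEdges_eq_map]
  refine sparse_one_zero_of_nodup_fst _ ?_
  rw [Multiset.map_map]
  exact hH.nodup_tails c

/-- in every reachable configuration, for each color `c`, the subgraph
consisting of the edges carrying a pebble of color `c` is `(1,0)`-sparse. -/
theorem monochromatic_subgraphs_sparse {V : Type} [Fintype V] [DecidableEq V]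
    (k ℓ : ℕ) (hk : 1 ≤ k) (hℓ : ℓ ≤ 2 * k - 1) (H : PGConfig V k)
    (hH : Reachable k ℓ H) (c : Fin k) :
    Sparse 1 0 (monoEdges H c) :=
  monochromatic_subgraphs_sparse_general k ℓ H hH c
end

section
/- In every reachable configuration of the (k,ℓ)-pebble game with colors, each pebble of color c_i lying on a vertex v is the root of a (possibly empty) monochromatic tree-piece of color c_i: the edges of color c_i whose maximal directed c_i-colored path terminates at v form a tree directed toward v (possibly consisting of the single vertex v). -/
open scoped Classical

open PebbleGame

/-!
Every vertex carries exactly one pebble of each color, counting both the pebbles it holds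
and those on its out-edges: both moves preserve this. So in color `c` every vertex has
out-degree at most one, and the vertex `v` holding a `c`-pebble has out-degree zero. In such
a digraph the vertices reaching `v` are closed under taking out-neighbours, and each of them
except `v` is the tail of exactly one arc, which gives the edge count.
-/

section ArcsWithDistinctTails

open Relation

variable {V : Type*} {E : Multiset (V × V)} {v : V}

theorem reflTransGen_snd_of_mem (hE : (E.map Prod.fst).Nodup) (hv : v ∉ E.map Prod.fst)
    {a b : V} (hab : (a, b) ∈ E) (ha : ReflTransGen (fun x y => (x, y) ∈ E) a v) :
    ReflTransGen (fun x y => (x, y) ∈ E) b v := by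
  rcases ha.cases_head with rfl | ⟨b', hab', hb'⟩
  · exact absurd (Multiset.mem_map_of_mem Prod.fst hab) hv
  · have hbb' : (a, b) = (a, b') := Multiset.inj_on_of_nodup_map hE _ hab _ hab' rfl
    rwa [(Prod.mk.inj hbb').2]

theorem card_filter_fst_mem_add_one [DecidableEq V] (hE : (E.map Prod.fst).Nodup)
    (hv : v ∉ E.map Prod.fst) {R : Finset V}
    (hR : ∀ u, u ∈ R ↔ ReflTransGen (fun x y => (x, y) ∈ E) u v) :
    (E.filter (·.1 ∈ R)).card + 1 = R.card := by
  have htails : (E.map Prod.fst).filter (· ∈ R) = (R.erase v).val := by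
    refine (Multiset.Nodup.ext (hE.filter _) (R.erase v).nodup).2 fun u => ?_
    simp only [Multiset.mem_filter, Finset.mem_val, Finset.mem_erase]
    constructor
    · rintro ⟨hu, huR⟩
      exact ⟨fun huv => hv (huv ▸ hu), huR⟩
    · rintro ⟨huv, huR⟩
      rcases ((hR u).1 huR).cases_head with rfl | ⟨b, hub, -⟩
      · exact absurd rfl huv
      · exact ⟨Multiset.mem_map_of_mem Prod.fst hub, huR⟩
  have hcard : (E.filter (·.1 ∈ R)).card = ((E.map Prod.fst).filter (· ∈ R)).card := by
    rw [Multiset.filter_map, Multiset.card_map]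
    rfl
  rw [hcard, htails, Finset.card_val, Finset.card_erase_add_one ((hR v).2 .refl)]

end ArcsWithDistinctTails

namespace PebbleGame

namespace PGConfig

variable {V : Type} {k : ℕ} (H : PGConfig V k)

def outColors [DecidableEq V] (u : V) : Multiset (Fin k) :=
  (H.edges.filter (·.1 = u)).map (·.2.2)

def colorArcs (c : Fin k) : Multiset (V × V) :=
  (H.edges.filter (·.2.2 = c)).map fun e => (e.1, e.2.1)

variable {H} {c : Fin k}

theorem mem_colorArcs {a b : V} : (a, b) ∈ H.colorArcs c ↔ (a, b, c) ∈ H.edges := by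
  simp [colorArcs]

theorem card_filter_colorArcs (p : V → Prop) [DecidablePred p] :
    ((H.colorArcs c).filter (p ·.1)).card =
      (H.edges.filter fun e => e.2.2 = c ∧ p e.1).card := by
  simp [colorArcs, Multiset.filter_map, Multiset.filter_filter, and_comm]

theorem count_map_fst_colorArcs [DecidableEq V] (u : V) :
    ((H.colorArcs c).map Prod.fst).count u = (H.outColors u).count c := by
  simp [colorArcs, outColors, Multiset.count_map, Multiset.filter_filter, and_comm, eq_comm]

end PGConfig

variable {V : Type} [DecidableEq V] {k ℓ : ℕ} {H H' : PGConfig V k}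

theorem Step.outColors_add_pebs (h : Step k ℓ H H') (u : V) :
    H'.outColors u + H'.pebs u = H.outColors u + H.pebs u := by
  cases h with
  | add v w c _ hc =>
    by_cases hv : v = u
    · subst hv
      simp [addEdgeCfg, PGConfig.outColors, ← Multiset.add_cons, Multiset.cons_erase hc]
    · simp [addEdgeCfg, PGConfig.outColors, hv, Function.update_of_ne (Ne.symm hv)]
  | slide v w c c' he hc =>
    obtain ⟨E, hE⟩ := Multiset.exists_cons_of_mem he
    have hback : c' ::ₘ (H.pebs w).erase c' = H.pebs w := Multiset.cons_erase hc
    by_cases hv : v = u <;> by_cases hw : w = u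
    · subst hv hw
      simp [slideCfg, PGConfig.outColors, hE, ← Multiset.add_cons, Multiset.cons_swap c', hback]
    · subst hv
      simp [slideCfg, PGConfig.outColors, hE, hw, Function.update_of_ne (Ne.symm hw)]
    · subst hw
      simp [slideCfg, PGConfig.outColors, hE, hv, Function.update_of_ne (Ne.symm hv),
        ← Multiset.add_cons, hback]
    · simp [slideCfg, PGConfig.outColors, hE, hv, hw, Function.update_of_ne (Ne.symm hv),
        Function.update_of_ne (Ne.symm hw)]

theorem Reachable.outColors_add_pebs [Fintype V] (h : Reachable k ℓ H) (u : V) :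
    H.outColors u + H.pebs u = Finset.univ.val := by
  induction h with
  | refl => simp [initCfg, PGConfig.outColors]
  | tail _ hstep ih => rw [hstep.outColors_add_pebs, ih]

theorem Reachable.count_outColors_add_count_pebs [Fintype V] (h : Reachable k ℓ H) (u : V)
    (c : Fin k) : (H.outColors u).count c + (H.pebs u).count c = 1 := by
  rw [← Multiset.count_add, h.outColors_add_pebs, Multiset.count_univ]

theorem Reachable.nodup_map_fst_colorArcs [Fintype V] (h : Reachable k ℓ H) (c : Fin k) :
    ((H.colorArcs c).map Prod.fst).Nodup :=
  Multiset.nodup_iff_count_le_one.2 fun u => by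
    have := h.count_outColors_add_count_pebs u c
    rw [PGConfig.count_map_fst_colorArcs]
    omega

theorem Reachable.notMem_map_fst_colorArcs [Fintype V] (h : Reachable k ℓ H) {c : Fin k}
    {v : V} (hpeb : c ∈ H.pebs v) : v ∉ (H.colorArcs c).map Prod.fst := by
  have := h.count_outColors_add_count_pebs v c
  rw [← Multiset.count_pos, PGConfig.count_map_fst_colorArcs]
  have := Multiset.count_pos.2 hpeb
  omega

end PebbleGame

theorem pebbles_are_roots_of_trees_general {V : Type} [Fintype V] [DecidableEq V]
    (k ℓ : ℕ) (H : PGConfig V k)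
    (hH : Reachable k ℓ H) (c : Fin k) (v : V) (hpeb : c ∈ H.pebs v)
    (R : Finset V)
    (hR : R = Finset.univ.filter fun u =>
        Relation.ReflTransGen (fun a b => (a, b, c) ∈ H.edges) u v) :
    v ∈ R ∧ (∀ e ∈ H.edges, e.2.2 = c → e.1 ∈ R → e.2.1 ∈ R) ∧
      (H.edges.filter fun e => e.2.2 = c ∧ e.1 ∈ R).card + 1 = R.card := by
  have hE := hH.nodup_map_fst_colorArcs c
  have hv := hH.notMem_map_fst_colorArcs hpeb
  have hmem : ∀ u, u ∈ R ↔
      Relation.ReflTransGen (fun a b => (a, b) ∈ H.colorArcs c) u v := by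
    simp [hR, PGConfig.mem_colorArcs]
  refine ⟨(hmem v).2 .refl, fun ⟨a, b, d⟩ he hd ha => ?_, ?_⟩
  · subst hd
    exact (hmem b).2 <|
      reflTransGen_snd_of_mem hE hv (PGConfig.mem_colorArcs.2 he) ((hmem a).1 ha)
  · rw [← PGConfig.card_filter_colorArcs]
    exact card_filter_fst_mem_add_one hE hv hmem

/-- in every reachable configuration, each pebble of color `c` lying on
a vertex `v` is the root of a (possibly empty) monochromatic tree-piece of color `c`:
letting `R` be the set of vertices whose maximal directed `c`-colored path terminates
at `v`, the color-`c` edges with tail in `R` stay inside `R` and form a tree with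
`|R| - 1` edges directed toward `v`. -/
theorem pebbles_are_roots_of_trees {V : Type} [Fintype V] [DecidableEq V]
    (k ℓ : ℕ) (hk : 1 ≤ k) (hℓ : ℓ ≤ 2 * k - 1) (H : PGConfig V k)
    (hH : Reachable k ℓ H) (c : Fin k) (v : V) (hpeb : c ∈ H.pebs v)
    (R : Finset V)
    (hR : R = Finset.univ.filter fun u =>
        Relation.ReflTransGen (fun a b => (a, b, c) ∈ H.edges) u v) :
    v ∈ R ∧ (∀ e ∈ H.edges, e.2.2 = c → e.1 ∈ R → e.2.1 ∈ R) ∧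
      (H.edges.filter fun e => e.2.2 = c ∧ e.1 ∈ R).card + 1 = R.card :=
  pebbles_are_roots_of_trees_general k ℓ H hH c v hpeb R hR
end

section
/- (Monochromatic cycle creation.) In the (k,ℓ)-pebble game with colors, suppose a single move applied to a reachable configuration creates a monochromatic cycle of color c_i. Then, before the move, there is a vertex v holding a pebble p of color c_i and a vertex w lying in the same maximal monochromatic c_i-colored tree as v, and the move is exactly one of: (M1) an add-edge move adding the edge vw and covering it with p; or (M2) a pebble-slide move reversing an edge wv and covering the resulting edge vw with p. No other move creates a monochromatic cycle. -/
open scoped Classical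

open PebbleGame

/-! A single move adds at most one edge of color `c`: an add-edge move covered with a pebble
of color `c`, or a slide whose new pebble has color `c` while the old one does not. Every other
move only deletes or reverses `c`-edges and cannot create a cycle. Adding an edge `vw` to an
acyclic multigraph creates a cycle only if `v` and `w` are already connected: otherwise the
vertex set `S` of the cycle splits into the component `C` of `v` in `S` and its complement, no
old edge joins the two, and each part spans fewer edges than it has vertices, so `S` spans at
most `|S| - 2` old edges and at most `|S| - 1` new ones. -/

namespace PebbleGame

variable {V : Type} [DecidableEq V] {k : ℕ}

theorem HasCycle.mono {E F : Multiset (Sym2 V)} (h : E ≤ F) (hE : HasCycle E) : HasCycle F := by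
  obtain ⟨S, hS, hcard⟩ := hE
  exact ⟨S, hS, hcard.trans (Multiset.card_le_card (Multiset.filter_le_filter _ h))⟩

theorem card_spanned_le_of_closed {E : Multiset (Sym2 V)} {S C : Finset V}
    (hC : ∀ a b, s(a, b) ∈ E → a ∈ C → b ∈ S → b ∈ C) :
    (spanned E S).card ≤ (spanned E C).card + (spanned E (S \ C)).card := by
  rw [← Multiset.filter_add_not (· ∈ C.sym2) (spanned E S), Multiset.card_add]
  gcongr
  · exact Multiset.filter_le_filter _ (Multiset.filter_le _ _)
  · refine Multiset.le_filter.2 ⟨(Multiset.filter_le _ _).trans (Multiset.filter_le _ _),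
      fun e he => ?_⟩
    obtain ⟨heS, heC⟩ := Multiset.mem_filter.1 he
    obtain ⟨heE, heS⟩ := Multiset.mem_filter.1 heS
    induction e using Sym2.inductionOn with
    | hf a b =>
      rw [Finset.mk_mem_sym2_iff] at heS heC ⊢
      have haC : a ∉ C := fun ha => heC ⟨ha, hC a b heE ha heS.2⟩
      have hbC : b ∉ C := fun hb => haC (hC b a (Sym2.eq_swap ▸ heE) hb heS.1)
      exact ⟨Finset.mem_sdiff.2 ⟨heS.1, haC⟩, Finset.mem_sdiff.2 ⟨heS.2, hbC⟩⟩

theorem conn_of_hasCycle_cons {E : Multiset (Sym2 V)} {v w : V} (hE : ¬HasCycle E)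
    (h : HasCycle (s(v, w) ::ₘ E)) : Conn E v w := by
  simp only [HasCycle, not_exists, not_and, not_le] at hE
  obtain ⟨S, hS, hcard⟩ := h
  by_cases hvw : s(v, w) ∈ S.sym2
  swap
  · rw [spanned, Multiset.filter_cons_of_neg _ hvw] at hcard
    exact absurd hcard (hE S hS).not_ge
  have hcons : (spanned (s(v, w) ::ₘ E) S).card = (spanned E S).card + 1 := by
    rw [spanned, Multiset.filter_cons_of_pos _ hvw, Multiset.card_cons, spanned]
  rw [Finset.mk_mem_sym2_iff] at hvw
  by_contra hvw'
  set C := S.filter (Conn E v)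
  have hCS : C ⊆ S := Finset.filter_subset _ _
  have hvC : v ∈ C := Finset.mem_filter.2 ⟨hvw.1, Relation.ReflTransGen.refl⟩
  have hwC : w ∈ S \ C := Finset.mem_sdiff.2 ⟨hvw.2, fun hw => hvw' (Finset.mem_filter.1 hw).2⟩
  have hclosed : ∀ a b, s(a, b) ∈ E → a ∈ C → b ∈ S → b ∈ C := fun a b hab ha hb =>
    Finset.mem_filter.2 ⟨hb, (Finset.mem_filter.1 ha).2.tail hab⟩
  have hsplit := card_spanned_le_of_closed hclosed
  have hCcard := hE C ⟨v, hvC⟩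
  have hSCcard := hE (S \ C) ⟨w, hwC⟩
  have hsdiff := Finset.card_sdiff_of_subset hCS
  have hCle := Finset.card_le_card hCS
  omega

omit [DecidableEq V] in
theorem monoOf_cons (v w : V) (c₀ c : Fin k) (F : Multiset (V × V × Fin k)) :
    monoOf ((v, w, c₀) ::ₘ F) c = if c₀ = c then s(v, w) ::ₘ monoOf F c else monoOf F c := by
  by_cases h : c₀ = c <;> simp [monoOf, h]

theorem monoEdges_addEdgeCfg_self (H : PGConfig V k) (v w : V) (c : Fin k) :
    monoEdges (addEdgeCfg H v w c) c = s(v, w) ::ₘ monoEdges H c :=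
  (monoOf_cons v w c c H.edges).trans (if_pos rfl)

theorem monoEdges_addEdgeCfg_of_ne (H : PGConfig V k) (v w : V) {c₀ c : Fin k} (h : c₀ ≠ c) :
    monoEdges (addEdgeCfg H v w c₀) c = monoEdges H c :=
  (monoOf_cons v w c₀ c H.edges).trans (if_neg h)

theorem monoEdges_eq_of_mem {H : PGConfig V k} {v w : V} {c₀ : Fin k} (he : (v, w, c₀) ∈ H.edges)
    (c : Fin k) : monoEdges H c =
      if c₀ = c then s(v, w) ::ₘ monoOf (H.edges.erase (v, w, c₀)) c
      else monoOf (H.edges.erase (v, w, c₀)) c := by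
  rw [← monoOf_cons, Multiset.cons_erase he]
  rfl

theorem monoEdges_slideCfg_of_ne {H : PGConfig V k} {v w : V} {c₀ c : Fin k}
    (he : (v, w, c₀) ∈ H.edges) (h : c₀ ≠ c) :
    monoEdges (slideCfg H v w c₀ c) c = s(w, v) ::ₘ monoEdges H c := by
  rw [monoEdges_eq_of_mem he, if_neg h]
  exact (monoOf_cons w v c c (H.edges.erase (v, w, c₀))).trans (if_pos rfl)

theorem monoEdges_slideCfg_le {H : PGConfig V k} {v w : V} {c₀ c' c : Fin k}
    (he : (v, w, c₀) ∈ H.edges) (h : c' ≠ c ∨ c₀ = c) :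
    monoEdges (slideCfg H v w c₀ c') c ≤ monoEdges H c := by
  change monoOf ((w, v, c') ::ₘ _) c ≤ _
  rw [monoOf_cons, monoEdges_eq_of_mem he]
  rcases eq_or_ne c' c with rfl | hc'
  · obtain rfl := h.resolve_left (not_not.2 rfl)
    simp [Sym2.eq_swap]
  · rw [if_neg hc']
    split_ifs
    · exact Multiset.le_cons_self _ _
    · exact le_rfl

end PebbleGame

theorem monochromatic_cycle_creation_general {V : Type} [DecidableEq V]
    (k ℓ : ℕ) (H H' : PGConfig V k)
    (hstep : Step k ℓ H H') (c : Fin k)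
    (hbefore : ¬HasCycle (monoEdges H c)) (hafter : HasCycle (monoEdges H' c)) :
    ∃ v w : V, c ∈ H.pebs v ∧ Conn (monoEdges H c) v w ∧
      (H' = addEdgeCfg H v w c ∨
        ∃ c' : Fin k, (w, v, c') ∈ H.edges ∧ H' = slideCfg H w v c' c) := by
  cases hstep with
  | add v w c₀ _ hc =>
    obtain rfl | hne := eq_or_ne c₀ c
    · rw [monoEdges_addEdgeCfg_self] at hafter
      exact ⟨v, w, hc, conn_of_hasCycle_cons hbefore hafter, Or.inl rfl⟩
    · rw [monoEdges_addEdgeCfg_of_ne H v w hne] at hafter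
      exact absurd hafter hbefore
  | slide w v c₀ c' he hc =>
    by_cases hnew : c' = c ∧ c₀ ≠ c
    · obtain ⟨rfl, hne⟩ := hnew
      rw [monoEdges_slideCfg_of_ne he hne] at hafter
      exact ⟨v, w, hc, conn_of_hasCycle_cons hbefore hafter, Or.inr ⟨c₀, he, rfl⟩⟩
    · refine absurd (hafter.mono (monoEdges_slideCfg_le he ?_)) hbefore
      tauto

/-- monochromatic cycle creation: if a single legal move applied to a
reachable configuration creates a monochromatic cycle of color `c`, then before the
move there are vertices `v` (holding a pebble `p` of color `c`) and `w` in the same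
maximal monochromatic `c`-colored tree, and the move is either (M1) an add-edge move
adding `vw` covered with `p`, or (M2) a pebble-slide move reversing an edge `wv` and
covering the resulting edge `vw` with `p`. -/
theorem monochromatic_cycle_creation {V : Type} [Fintype V] [DecidableEq V]
    (k ℓ : ℕ) (hk : 1 ≤ k) (hℓ : ℓ ≤ 2 * k - 1) (H H' : PGConfig V k)
    (hH : Reachable k ℓ H) (hstep : Step k ℓ H H') (c : Fin k)
    (hbefore : ¬HasCycle (monoEdges H c)) (hafter : HasCycle (monoEdges H' c)) :
    ∃ v w : V, c ∈ H.pebs v ∧ Conn (monoEdges H c) v w ∧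
      (H' = addEdgeCfg H v w c ∨
        ∃ c' : Fin k, (w, v, c') ∈ H.edges ∧ H' = slideCfg H w v c' c) :=
  monochromatic_cycle_creation_general k ℓ H H' hstep c hbefore hafter
end
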